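/- arXiv:2111.12743 — 7 statements merged into one kernel-verified Lean document; each statement's English description precedes it below -/
import Mathlib

section
/- Let Φ : ℝⁿ × ℝᵐ → ℝ be differentiable, such that for every y, x ↦ Φ(x,y) is μ_x-strongly convex (μ_x > 0), for every x, y ↦ Φ(x,y) is μ_y-strongly concave (μ_y > 0), and ∇_x Φ is Lipschitz in y with constant L_{xy}: ‖∇_x Φ(x,y) − ∇_x Φ(x,ȳ)‖ ≤ L_{xy}‖y − ȳ‖ for all x, y, ȳ. Define x*(y) = argmin_x Φ(x,y). Then x* is Lipschitz continuous with constant √(2(L_{xy}/μ_x)² + 1): for all y, ȳ, ‖x*(y) − x*(ȳ)‖ ≤ √(2 L_{xy}²/μ_x² + 1) · ‖y − ȳ‖. -/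
/-!
Let `a = x*(y)` and `b = x*(ȳ)`. Adding the first-order inequalities of the `μₓ`-strongly convex
`Φ(·, ȳ)` at `a` and at its minimiser `b` gives `μₓ ‖a - b‖² ≤ ⟪∇ₓΦ(a, ȳ), a - b⟫`, hence
`μₓ ‖a - b‖ ≤ ‖∇ₓΦ(a, ȳ)‖ = ‖∇ₓΦ(a, ȳ) - ∇ₓΦ(a, y)‖ ≤ Lₓᵧ ‖y - ȳ‖`, because `∇ₓΦ(a, y) = 0`.
So `x*` is `Lₓᵧ / μₓ`-Lipschitz, and `Lₓᵧ / μₓ ≤ √(2 Lₓᵧ² / μₓ² + 1)`.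
-/

open Set InnerProductSpace AffineMap
open scoped RealInnerProductSpace

variable {E : Type*} [NormedAddCommGroup E]

theorem ConvexOn.add_fderiv_sub_le [NormedSpace ℝ E] {s : Set E} {f : E → ℝ}
    {f' : E →L[ℝ] ℝ} {x z : E} (hf : ConvexOn ℝ s f) (hx : x ∈ s) (hz : z ∈ s)
    (hf' : HasFDerivAt f f' x) :
    f x + f' (z - x) ≤ f z := by
  have hline := hf.comp_affineMap (lineMap x z : ℝ →ᵃ[ℝ] E)
  have hderiv : HasDerivAt (f ∘ lineMap (k := ℝ) x z) (f' (z - x)) 0 :=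
    (by simpa using hf' : HasFDerivAt f f' (lineMap x z (0 : ℝ))).comp_hasDerivAt 0
      hasDerivAt_lineMap
  have := hline.le_slope_of_hasDerivAt (x := 0) (y := 1) (by simpa using hx) (by simpa using hz)
    zero_lt_one hderiv
  simp only [slope_def_field, Function.comp_apply, lineMap_apply_one, lineMap_apply_zero,
    sub_zero, div_one] at this
  linarith

variable [InnerProductSpace ℝ E] [CompleteSpace E]

theorem StrongConvexOn.add_inner_add_le_of_hasGradientAt {s : Set E} {f : E → ℝ} {μ : ℝ}
    {x z g : E} (hf : StrongConvexOn s μ f) (hx : x ∈ s) (hz : z ∈ s) (hg : HasGradientAt f g x) :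
    f x + ⟪g, z - x⟫ + μ / 2 * ‖z - x‖ ^ 2 ≤ f z := by
  have hconv := strongConvexOn_iff_convex.1 hf
  have hderiv := hg.hasFDerivAt.sub ((hasStrictFDerivAt_norm_sq x).hasFDerivAt.const_mul (μ / 2))
  have := hconv.add_fderiv_sub_le hx hz hderiv
  simp only [sub_apply, smul_apply, toDual_apply_apply,
    innerSL_apply_apply, smul_eq_mul, nsmul_eq_mul, Nat.cast_ofNat] at this
  have hnorm : ‖z‖ ^ 2 = ‖x‖ ^ 2 + 2 * ⟪x, z - x⟫ + ‖z - x‖ ^ 2 := by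
    rw [← norm_add_sq_real, add_sub_cancel]
  linear_combination this - μ / 2 * hnorm

theorem IsLocalMin.hasGradientAt_eq_zero {f : E → ℝ} {x g : E} (h : IsLocalMin f x)
    (hg : HasGradientAt f g x) : g = 0 :=
  (toDual ℝ E).map_eq_zero_iff.1 (h.hasFDerivAt_eq_zero hg.hasFDerivAt)

theorem StrongConvexOn.mul_norm_sub_le_norm_of_hasGradientAt {f : E → ℝ} {μ : ℝ} {a b ga gb : E}
    (hf : StrongConvexOn univ μ f) (ha : HasGradientAt f ga a) (hb : HasGradientAt f gb b)
    (hmin : IsMinOn f univ b) :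
    μ * ‖a - b‖ ≤ ‖ga‖ := by
  have hgb : gb = 0 := (hmin.isLocalMin Filter.univ_mem).hasGradientAt_eq_zero hb
  have hab := hf.add_inner_add_le_of_hasGradientAt (mem_univ a) (mem_univ b) ha
  have hba := hf.add_inner_add_le_of_hasGradientAt (mem_univ b) (mem_univ a) hb
  rw [hgb, inner_zero_left, add_zero] at hba
  have hmono : μ * ‖a - b‖ ^ 2 ≤ ‖ga‖ * ‖a - b‖ := by
    have := real_inner_le_norm ga (a - b)
    rw [← neg_sub a b, inner_neg_right, norm_neg] at hab
    nlinarith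
  rcases (norm_nonneg (a - b)).eq_or_lt with hzero | hpos
  · rw [← hzero, mul_zero]
    exact norm_nonneg _
  · rw [sq, ← mul_assoc] at hmono
    exact le_of_mul_le_mul_right hmono hpos

theorem argmin_lipschitz_general {n m : ℕ}
    (μx Lxy : ℝ) (hμx : 0 < μx)
    (Φ : EuclideanSpace ℝ (Fin n) → EuclideanSpace ℝ (Fin m) → ℝ)
    (Gx : EuclideanSpace ℝ (Fin n) → EuclideanSpace ℝ (Fin m) → EuclideanSpace ℝ (Fin n))
    (hGx : ∀ x y, HasGradientAt (fun x' => Φ x' y) (Gx x y) x)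
    (hsc : ∀ y, StrongConvexOn Set.univ μx (fun x => Φ x y))
    (hlip : ∀ x y ybar, ‖Gx x y - Gx x ybar‖ ≤ Lxy * ‖y - ybar‖)
    (xs : EuclideanSpace ℝ (Fin m) → EuclideanSpace ℝ (Fin n))
    (hxs : ∀ y x, Φ (xs y) y ≤ Φ x y) :
    ∀ y ybar, ‖xs y - xs ybar‖ ≤ Real.sqrt (2 * Lxy ^ 2 / μx ^ 2 + 1) * ‖y - ybar‖ := by
  intro y ybar
  have hzero : Gx (xs y) y = 0 :=
    ((isMinOn_univ_iff.2 (hxs y)).isLocalMin Filter.univ_mem).hasGradientAt_eq_zero (hGx _ _)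
  have hratio : ‖xs y - xs ybar‖ ≤ Lxy / μx * ‖y - ybar‖ := by
    rw [div_mul_eq_mul_div, le_div_iff₀ hμx, mul_comm]
    calc μx * ‖xs y - xs ybar‖
        ≤ ‖Gx (xs y) ybar‖ := (hsc ybar).mul_norm_sub_le_norm_of_hasGradientAt (hGx _ _) (hGx _ _)
          (isMinOn_univ_iff.2 (hxs ybar))
      _ = ‖Gx (xs y) y - Gx (xs y) ybar‖ := by rw [hzero, zero_sub, norm_neg]
      _ ≤ Lxy * ‖y - ybar‖ := hlip _ _ _
  have hconst : Lxy / μx ≤ Real.sqrt (2 * Lxy ^ 2 / μx ^ 2 + 1) := by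
    refine (le_abs_self _).trans (Real.abs_le_sqrt ?_)
    have : 0 ≤ Lxy ^ 2 / μx ^ 2 := by positivity
    rw [div_pow, mul_div_assoc]
    linarith
  exact hratio.trans (by gcongr)

/-- If `Φ(·,y)` is `μx`-strongly convex, `Φ(x,·)` is `μy`-strongly concave,
and `∇ₓΦ` is `Lxy`-Lipschitz in `y`, then `y ↦ x*(y) = argmin_x Φ(x,y)` is Lipschitz
with constant `√(2 Lxy²/μx² + 1)`. -/
theorem argmin_lipschitz {n m : ℕ}
    (μx μy Lxy : ℝ) (hμx : 0 < μx) (hμy : 0 < μy)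
    (Φ : EuclideanSpace ℝ (Fin n) → EuclideanSpace ℝ (Fin m) → ℝ)
    (Gx : EuclideanSpace ℝ (Fin n) → EuclideanSpace ℝ (Fin m) → EuclideanSpace ℝ (Fin n))
    (hGx : ∀ x y, HasGradientAt (fun x' => Φ x' y) (Gx x y) x)
    (hsc : ∀ y, StrongConvexOn Set.univ μx (fun x => Φ x y))
    (hscc : ∀ x, StrongConvexOn Set.univ μy (fun y => -Φ x y))
    (hlip : ∀ x y ybar, ‖Gx x y - Gx x ybar‖ ≤ Lxy * ‖y - ybar‖)
    (xs : EuclideanSpace ℝ (Fin m) → EuclideanSpace ℝ (Fin n))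
    (hxs : ∀ y x, Φ (xs y) y ≤ Φ x y) :
    ∀ y ybar, ‖xs y - xs ybar‖ ≤ Real.sqrt (2 * Lxy ^ 2 / μx ^ 2 + 1) * ‖y - ybar‖ :=
  argmin_lipschitz_general μx Lxy hμx Φ Gx hGx hsc hlip xs hxs
end

section
/- Let τ, σ, θ, α, π₁, π₂ > 0 and L_{xx}, L_{yy} ≥ 0, L_{yx} > 0 satisfy 1/τ ≥ L_{xx} + π₁ L_{yx}, 1/σ ≥ θ L_{yx}/π₁ + (θ/π₂ + π₂) L_{yy}, and α = θ L_{yx}/π₁ + θ L_{yy}/π₂. Then the 3×3 symmetric matrix M with rows (1/τ − L_{xx}, 0, −L_{yx}), (0, 1/σ − α, −L_{yy}), (−L_{yx}, −L_{yy}, α/θ) is positive semidefinite. -/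
/-! Split `M` as `M₁ + M₂`, where `M₁` only involves the coordinates `(x, z)` and `M₂` only
`(y, z)`, sharing the corner entry `α / θ = Lyx / π₁ + Lyy / π₂`. Each summand is a 2×2 block
`[[a, -b], [-b, c]]` with `a, c ≥ 0` and `b² ≤ a c`, which the step-size conditions guarantee. -/

lemma two_mul_mul_le_of_sq_le_mul {a b c : ℝ} (ha : 0 ≤ a) (hc : 0 ≤ c) (h : b ^ 2 ≤ a * c)
    (x z : ℝ) : 2 * b * x * z ≤ a * x ^ 2 + c * z ^ 2 := by
  rcases ha.eq_or_lt with rfl | ha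
  · obtain rfl : b = 0 := by nlinarith [sq_nonneg b]
    nlinarith [sq_nonneg z]
  · -- `a (a x² - 2 b x z + c z²) = (a x - b z)² + (a c - b²) z²`
    nlinarith [sq_nonneg (a * x - b * z), mul_nonneg (sub_nonneg.2 h) (sq_nonneg z)]

lemma posSemidef_of_sq_le_mul {p q r s t₁ t₂ : ℝ} (hp : 0 ≤ p) (hr : 0 ≤ r)
    (ht₁ : 0 ≤ t₁) (ht₂ : 0 ≤ t₂) (hq : q ^ 2 ≤ p * t₁) (hs : s ^ 2 ≤ r * t₂) :
    !![p, 0, -q;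
       0, r, -s;
       -q, -s, t₁ + t₂].PosSemidef := by
  rw [Matrix.posSemidef_iff_dotProduct_mulVec]
  refine ⟨?_, fun v => ?_⟩
  · ext i j
    fin_cases i <;> fin_cases j <;> simp
  · have hxz := two_mul_mul_le_of_sq_le_mul hp ht₁ hq (v 0) (v 2)
    have hyz := two_mul_mul_le_of_sq_le_mul hr ht₂ hs (v 1) (v 2)
    simp only [dotProduct, Pi.star_apply, star_trivial, Matrix.mulVec, Matrix.of_apply,
      Matrix.cons_val', Matrix.cons_val_fin_one, Fin.sum_univ_three, Fin.isValue,
      Matrix.cons_val_zero, Matrix.cons_val_one, Matrix.cons_val, zero_mul, add_zero, neg_mul,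
      zero_add]
    linarith

lemma sq_le_mul_div_of_mul_le {a b π : ℝ} (hb : 0 ≤ b) (hπ : 0 < π) (h : π * b ≤ a) :
    b ^ 2 ≤ a * (b / π) :=
  calc b ^ 2 = π * b * (b / π) := by field_simp
    _ ≤ a * (b / π) := by gcongr

theorem noise_LMI_psd_general
    (τ σ θ α π₁ π₂ Lxx Lyy Lyx : ℝ)
    (hθ : 0 < θ)
    (hπ₁ : 0 < π₁) (hπ₂ : 0 < π₂)
    (hLyy : 0 ≤ Lyy) (hLyx : 0 < Lyx)
    (h1 : 1 / τ ≥ Lxx + π₁ * Lyx)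
    (h2 : 1 / σ ≥ θ * Lyx / π₁ + (θ / π₂ + π₂) * Lyy)
    (h3 : α = θ * Lyx / π₁ + θ * Lyy / π₂) :
    (Matrix.of !![1 / τ - Lxx, 0, -Lyx;
                  0, 1 / σ - α, -Lyy;
                  -Lyx, -Lyy, α / θ]).PosSemidef := by
  have hα : α / θ = Lyx / π₁ + Lyy / π₂ := by
    rw [h3]; field_simp
  have hx : π₁ * Lyx ≤ 1 / τ - Lxx := by linarith
  have hy : π₂ * Lyy ≤ 1 / σ - α := by
    rw [h3]; linarith [show (θ / π₂ + π₂) * Lyy = θ * Lyy / π₂ + π₂ * Lyy by ring]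
  rw [hα]
  exact posSemidef_of_sq_le_mul (by nlinarith) (by nlinarith) (by positivity)
    (by positivity) (sq_le_mul_div_of_mul_le hLyx.le hπ₁ hx) (sq_le_mul_div_of_mul_le hLyy hπ₂ hy)

/-- Lemma 2.4 / LEMMA: Noise LMI after Young's inequality:
Under the step-size conditions, the 3×3 matrix `M` is positive semidefinite. -/
theorem noise_LMI_psd
    (τ σ θ α π₁ π₂ Lxx Lyy Lyx : ℝ)
    (hτ : 0 < τ) (hσ : 0 < σ) (hθ : 0 < θ) (hα : 0 < α)
    (hπ₁ : 0 < π₁) (hπ₂ : 0 < π₂)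
    (hLxx : 0 ≤ Lxx) (hLyy : 0 ≤ Lyy) (hLyx : 0 < Lyx)
    (h1 : 1 / τ ≥ Lxx + π₁ * Lyx)
    (h2 : 1 / σ ≥ θ * Lyx / π₁ + (θ / π₂ + π₂) * Lyy)
    (h3 : α = θ * Lyx / π₁ + θ * Lyy / π₂) :
    (Matrix.of !![1 / τ - Lxx, 0, -Lyx;
                  0, 1 / σ - α, -Lyy;
                  -Lyx, -Lyy, α / θ]).PosSemidef :=
  noise_LMI_psd_general τ σ θ α π₁ π₂ Lxx Lyy Lyx hθ hπ₁ hπ₂ hLyy hLyx h1 h2 h3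
end

section
/- Fix L_{xx}, L_{yy} ≥ 0, L_{yx}, μ_x, μ_y > 0, τ, σ, θ > 0, α ∈ [0, 1/σ), and ρ ∈ (0,1]. Suppose the 5×5 matrix G (with diagonal (1/τ + μ_x − 1/(ρτ), 1/σ + μ_y − 1/(ρσ), 1/τ − L_{xx}, 1/σ − α, α/ρ) and off-diagonals G(2,3) = (θ/ρ − 1)L_{yx}, G(2,4) = (θ/ρ − 1)L_{yy}, G(3,5) = −(θ/ρ)L_{yx}, G(4,5) = −(θ/ρ)L_{yy}, zeros elsewhere) is positive semidefinite. Then the 3×3 matrix G'' with rows ((1/σ)(1 − 1/ρ) + μ_y + α/ρ, −(|1 − θ/ρ| + θ/ρ)L_{yx}, −(|1 − θ/ρ| + θ/ρ)L_{yy}), (−(|1 − θ/ρ| + θ/ρ)L_{yx}, 1/τ − L_{xx}, 0), (−(|1 − θ/ρ| + θ/ρ)L_{yy}, 0, 1/σ − α) is positive semidefinite. -/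
/-!
`G''` is congruent to `G`: with `s = ±1` chosen so that `s (1 - θ/ρ) = |1 - θ/ρ|`, the quadratic
form of `G''` at `(x₁, x₂, x₃)` is that of `G` at `(0, s x₁, x₂, x₃, x₁)`, i.e. `G'' = Pᵀ G P` for
the 5×3 matrix `P` of that linear map. Congruence preserves positive semidefiniteness.
-/

/-- The 5×5 matrix `G` from the SAPD step-size condition. -/
noncomputable def sapdG (Lxx Lyy Lyx μx μy τ σ θ α ρ : ℝ) : Matrix (Fin 5) (Fin 5) ℝ :=
  !![1 / τ + μx - 1 / (ρ * τ), 0, 0, 0, 0;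
     0, 1 / σ + μy - 1 / (ρ * σ), (θ / ρ - 1) * Lyx, (θ / ρ - 1) * Lyy, 0;
     0, (θ / ρ - 1) * Lyx, 1 / τ - Lxx, 0, -(θ / ρ) * Lyx;
     0, (θ / ρ - 1) * Lyy, 0, 1 / σ - α, -(θ / ρ) * Lyy;
     0, 0, -(θ / ρ) * Lyx, -(θ / ρ) * Lyy, α / ρ]

open Matrix

lemma Real.exists_mul_self_eq_one_and_mul_eq_abs (t : ℝ) :
    ∃ s : ℝ, s * s = 1 ∧ s * t = |t| := by
  rcases abs_cases t with ⟨ht, -⟩ | ⟨ht, -⟩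
  · exact ⟨1, by norm_num, by rw [ht]; ring⟩
  · exact ⟨-1, by norm_num, by rw [ht]; ring⟩

def sapdEmbedding (s : ℝ) : Matrix (Fin 5) (Fin 3) ℝ :=
  !![0, 0, 0;
     s, 0, 0;
     0, 1, 0;
     0, 0, 1;
     1, 0, 0]

lemma sapdEmbedding_conjTranspose_mul_sapdG_mul (Lxx Lyy Lyx μx μy τ σ θ α ρ s : ℝ)
    (hs : s * s = 1) (hsθ : s * (1 - θ / ρ) = |1 - θ / ρ|) :
    (sapdEmbedding s)ᴴ * sapdG Lxx Lyy Lyx μx μy τ σ θ α ρ * sapdEmbedding s =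
      !![(1 / σ) * (1 - 1 / ρ) + μy + α / ρ,
            -(|1 - θ / ρ| + θ / ρ) * Lyx, -(|1 - θ / ρ| + θ / ρ) * Lyy;
         -(|1 - θ / ρ| + θ / ρ) * Lyx, 1 / τ - Lxx, 0;
         -(|1 - θ / ρ| + θ / ρ) * Lyy, 0, 1 / σ - α] := by
  rw [← hsθ]
  ext i j
  fin_cases i <;> fin_cases j <;>
    simp [sapdEmbedding, sapdG, Matrix.mul_apply, Fin.sum_univ_five] <;>
    first | ring1 | linear_combination (1 / σ + μy - 1 / (ρ * σ)) * hs

theorem sapdG_psd_implies_G''_psd_general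
    (Lxx Lyy Lyx μx μy τ σ θ α ρ : ℝ)
    (hG : (sapdG Lxx Lyy Lyx μx μy τ σ θ α ρ).PosSemidef) :
    (Matrix.of
      !![(1 / σ) * (1 - 1 / ρ) + μy + α / ρ,
            -(|1 - θ / ρ| + θ / ρ) * Lyx, -(|1 - θ / ρ| + θ / ρ) * Lyy;
         -(|1 - θ / ρ| + θ / ρ) * Lyx, 1 / τ - Lxx, 0;
         -(|1 - θ / ρ| + θ / ρ) * Lyy, 0, 1 / σ - α]).PosSemidef := by
  obtain ⟨s, hs, hsθ⟩ := Real.exists_mul_self_eq_one_and_mul_eq_abs (1 - θ / ρ)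
  rw [← sapdEmbedding_conjTranspose_mul_sapdG_mul Lxx Lyy Lyx μx μy τ σ θ α ρ s hs hsθ]
  exact hG.conjTranspose_mul_mul_same (sapdEmbedding s)

/-- `G ⪰ 0` implies that the 3×3 matrix `G''` is positive semidefinite. -/
theorem sapdG_psd_implies_G''_psd
    (Lxx Lyy Lyx μx μy τ σ θ α ρ : ℝ)
    (hLxx : 0 ≤ Lxx) (hLyy : 0 ≤ Lyy) (hLyx : 0 < Lyx)
    (hμx : 0 < μx) (hμy : 0 < μy) (hτ : 0 < τ) (hσ : 0 < σ)
    (hθ : 0 < θ) (hα0 : 0 ≤ α) (hα1 : α < 1 / σ) (hρ0 : 0 < ρ) (hρ1 : ρ ≤ 1)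
    (hG : (sapdG Lxx Lyy Lyx μx μy τ σ θ α ρ).PosSemidef) :
    (Matrix.of
      !![(1 / σ) * (1 - 1 / ρ) + μy + α / ρ,
            -(|1 - θ / ρ| + θ / ρ) * Lyx, -(|1 - θ / ρ| + θ / ρ) * Lyy;
         -(|1 - θ / ρ| + θ / ρ) * Lyx, 1 / τ - Lxx, 0;
         -(|1 - θ / ρ| + θ / ρ) * Lyy, 0, 1 / σ - α]).PosSemidef :=
  sapdG_psd_implies_G''_psd_general Lxx Lyy Lyx μx μy τ σ θ α ρ hG
end

section
/- Let μ_x, μ_y > 0, L_{xx}, L_{yy} ≥ 0, L_{yx} > 0 and β ∈ (0,1). Define θ̄₁ = 1 − (β(L_{xx}+μ_x)μ_y)/(2L_{yx}²) · (√(1 + 4μ_x L_{yx}²/(β μ_y (L_{xx}+μ_x)²)) − 1) and θ̄₂ = 1 − ((1−β)²/8)(μ_y²/L_{yy}²)(√(1 + 16 L_{yy}²/((1−β)² μ_y²)) − 1) (for L_{yy} > 0). Then: (i) θ̄₁ and θ̄₂ both lie in (0,1); (ii) for every θ ∈ [θ̄₂, 1), the inequality (2 L_{yy}/μ_y) ·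 (1−θ)/√θ ≤ 1 − β holds; (iii) for every θ ∈ [θ̄₁, 1), the inequality θ μ_x/(1−θ) − L_{xx} ≥ (1−θ) L_{yx}²/(β μ_y) holds. -/
private lemma aux_sqrt_gt_one {x : ℝ} (hx : 0 < x) : 1 < Real.sqrt (1 + x) := by
  nlinarith [Real.sq_sqrt (by linarith : (0:ℝ) ≤ 1 + x), Real.sqrt_nonneg (1 + x)]

private lemma aux_fam1 (μx μy Lxx Lyx β : ℝ)
    (hμx : 0 < μx) (hμy : 0 < μy) (hLxx : 0 ≤ Lxx) (hLyx : 0 < Lyx)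
    (hβ0 : 0 < β) (hβ1 : β < 1) :
    0 < β * (Lxx + μx) * μy / (2 * Lyx ^ 2) *
        (Real.sqrt (1 + 4 * μx * Lyx ^ 2 / (β * μy * (Lxx + μx) ^ 2)) - 1) ∧
    β * (Lxx + μx) * μy / (2 * Lyx ^ 2) *
        (Real.sqrt (1 + 4 * μx * Lyx ^ 2 / (β * μy * (Lxx + μx) ^ 2)) - 1) < 1 ∧
    Lyx ^ 2 * (β * (Lxx + μx) * μy / (2 * Lyx ^ 2) *
        (Real.sqrt (1 + 4 * μx * Lyx ^ 2 / (β * μy * (Lxx + μx) ^ 2)) - 1)) ^ 2 +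
      (Lxx + μx) * (β * μy) * (β * (Lxx + μx) * μy / (2 * Lyx ^ 2) *
        (Real.sqrt (1 + 4 * μx * Lyx ^ 2 / (β * μy * (Lxx + μx) ^ 2)) - 1)) = μx * (β * μy) := by
  have hq : 0 < Lxx + μx := by linarith
  have hβμy : 0 < β * μy := mul_pos hβ0 hμy
  set S := Real.sqrt (1 + 4 * μx * Lyx ^ 2 / (β * μy * (Lxx + μx) ^ 2)) with hSdef
  have hS1 : 1 < S := aux_sqrt_gt_one (by positivity)
  have hS2 : S ^ 2 = 1 + 4 * μx * Lyx ^ 2 / (β * μy * (Lxx + μx) ^ 2) :=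
    Real.sq_sqrt (by positivity)
  have hS2' : S ^ 2 * (β * μy * (Lxx + μx) ^ 2) = β * μy * (Lxx + μx) ^ 2 + 4 * μx * Lyx ^ 2 := by
    have hd : β * μy * (Lxx + μx) ^ 2 ≠ 0 := by positivity
    rw [hS2, add_mul, one_mul, div_mul_cancel₀ _ hd]
  clear_value S
  set t := β * (Lxx + μx) * μy / (2 * Lyx ^ 2) * (S - 1) with htdef
  have ht : t * (2 * Lyx ^ 2) = β * (Lxx + μx) * μy * (S - 1) := by
    rw [htdef]; field_simp
  have ht0 : 0 < t := by
    rw [htdef]; exact mul_pos (by positivity) (by linarith)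
  have hkey : Lyx ^ 2 * t ^ 2 + (Lxx + μx) * (β * μy) * t = μx * (β * μy) := by
    have h4 : (4 * Lyx ^ 2) * (Lyx ^ 2 * t ^ 2 + (Lxx + μx) * (β * μy) * t) =
        (4 * Lyx ^ 2) * (μx * (β * μy)) := by
      calc (4 * Lyx ^ 2) * (Lyx ^ 2 * t ^ 2 + (Lxx + μx) * (β * μy) * t)
          = (t * (2 * Lyx ^ 2)) ^ 2 + 2 * ((Lxx + μx) * (β * μy)) * (t * (2 * Lyx ^ 2)) := by
            ring
        _ = (β * (Lxx + μx) * μy * (S - 1)) ^ 2 +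
              2 * ((Lxx + μx) * (β * μy)) * (β * (Lxx + μx) * μy * (S - 1)) := by rw [ht]
        _ = β * μy * (S ^ 2 * (β * μy * (Lxx + μx) ^ 2) - β * μy * (Lxx + μx) ^ 2) := by ring
        _ = β * μy * (β * μy * (Lxx + μx) ^ 2 + 4 * μx * Lyx ^ 2 - β * μy * (Lxx + μx) ^ 2) := by
            rw [hS2']
        _ = (4 * Lyx ^ 2) * (μx * (β * μy)) := by ring
    exact mul_left_cancel₀ (by positivity) h4
  have ht1 : t < 1 := by
    set B := 1 + 2 * Lyx ^ 2 / (β * μy * (Lxx + μx)) with hBdef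
    have hB1 : 1 < B := by
      rw [hBdef]
      have : 0 < 2 * Lyx ^ 2 / (β * μy * (Lxx + μx)) := by positivity
      linarith
    have expand : B ^ 2 = 1 + 4 * μx * Lyx ^ 2 / (β * μy * (Lxx + μx) ^ 2) +
        4 * Lyx ^ 2 / (β * μy * (Lxx + μx) ^ 2) * (Lxx + Lyx ^ 2 / (β * μy)) := by
      rw [hBdef]; field_simp; ring
    have hpos : 0 < 4 * Lyx ^ 2 / (β * μy * (Lxx + μx) ^ 2) * (Lxx + Lyx ^ 2 / (β * μy)) := by
      have h1 : 0 < Lxx + Lyx ^ 2 / (β * μy) := by positivity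
      positivity
    have hsq : S ^ 2 < B ^ 2 := by rw [hS2, expand]; linarith
    have hSB : S < B := by nlinarith [hS1, hB1]
    have h2 : t < β * (Lxx + μx) * μy / (2 * Lyx ^ 2) * (B - 1) := by
      rw [htdef]; exact mul_lt_mul_of_pos_left (by linarith) (by positivity)
    have h3 : β * (Lxx + μx) * μy / (2 * Lyx ^ 2) * (B - 1) = 1 := by
      rw [hBdef]; field_simp; ring
    linarith
  exact ⟨ht0, ht1, hkey⟩

private lemma aux_fam2 (μy Lyy β : ℝ)
    (hμy : 0 < μy) (hLyy : 0 < Lyy) (hβ0 : 0 < β) (hβ1 : β < 1) :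
    ∃ u : ℝ, 0 < u ∧ u < 1 ∧ 2 * Lyy * u ^ 2 + (1 - β) * μy * u = 2 * Lyy ∧
      1 - (1 - β) ^ 2 / 8 * (μy ^ 2 / Lyy ^ 2) *
          (Real.sqrt (1 + 16 * Lyy ^ 2 / ((1 - β) ^ 2 * μy ^ 2)) - 1) = u ^ 2 := by
  have h1β : 0 < 1 - β := by linarith
  set T := Real.sqrt (1 + 16 * Lyy ^ 2 / ((1 - β) ^ 2 * μy ^ 2)) with hTdef
  have hT1 : 1 < T := aux_sqrt_gt_one (by positivity)
  have hT2 : T ^ 2 = 1 + 16 * Lyy ^ 2 / ((1 - β) ^ 2 * μy ^ 2) := Real.sq_sqrt (by positivity)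
  have hT2' : T ^ 2 * ((1 - β) ^ 2 * μy ^ 2) = (1 - β) ^ 2 * μy ^ 2 + 16 * Lyy ^ 2 := by
    have hd : (1 - β) ^ 2 * μy ^ 2 ≠ 0 := by positivity
    rw [hT2, add_mul, one_mul, div_mul_cancel₀ _ hd]
  clear_value T
  refine ⟨(1 - β) * μy / (4 * Lyy) * (T - 1), mul_pos (by positivity) (by linarith), ?_, ?_, ?_⟩
  case refine_2 =>
    set u := (1 - β) * μy / (4 * Lyy) * (T - 1) with hudef
    have ht : u * (4 * Lyy) = (1 - β) * μy * (T - 1) := by rw [hudef]; field_simp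
    have h8 : (8 * Lyy) * (2 * Lyy * u ^ 2 + (1 - β) * μy * u) = (8 * Lyy) * (2 * Lyy) := by
      calc (8 * Lyy) * (2 * Lyy * u ^ 2 + (1 - β) * μy * u)
          = (u * (4 * Lyy)) ^ 2 + 2 * ((1 - β) * μy) * (u * (4 * Lyy)) := by ring
        _ = ((1 - β) * μy * (T - 1)) ^ 2 + 2 * ((1 - β) * μy) * ((1 - β) * μy * (T - 1)) := by
            rw [ht]
        _ = T ^ 2 * ((1 - β) ^ 2 * μy ^ 2) - (1 - β) ^ 2 * μy ^ 2 := by ring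
        _ = (1 - β) ^ 2 * μy ^ 2 + 16 * Lyy ^ 2 - (1 - β) ^ 2 * μy ^ 2 := by rw [hT2']
        _ = (8 * Lyy) * (2 * Lyy) := by ring
    exact mul_left_cancel₀ (by positivity) h8
  case refine_3 =>
    set u := (1 - β) * μy / (4 * Lyy) * (T - 1) with hudef
    have ht : u * (4 * Lyy) = (1 - β) * μy * (T - 1) := by rw [hudef]; field_simp
    have hDu : (1 - β) ^ 2 / 8 * (μy ^ 2 / Lyy ^ 2) * (T - 1) * (8 * Lyy ^ 2) =
        (1 - β) ^ 2 * μy ^ 2 * (T - 1) := by field_simp; try ring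
    have h16 : (16 * Lyy ^ 2) * (1 - (1 - β) ^ 2 / 8 * (μy ^ 2 / Lyy ^ 2) * (T - 1)) =
        (16 * Lyy ^ 2) * u ^ 2 := by
      calc (16 * Lyy ^ 2) * (1 - (1 - β) ^ 2 / 8 * (μy ^ 2 / Lyy ^ 2) * (T - 1))
          = 16 * Lyy ^ 2 - 2 * ((1 - β) ^ 2 / 8 * (μy ^ 2 / Lyy ^ 2) * (T - 1) * (8 * Lyy ^ 2)) := by
            ring
        _ = 16 * Lyy ^ 2 - 2 * ((1 - β) ^ 2 * μy ^ 2 * (T - 1)) := by rw [hDu]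
        _ = ((1 - β) * μy * (T - 1)) ^ 2 -
              (T ^ 2 * ((1 - β) ^ 2 * μy ^ 2) - ((1 - β) ^ 2 * μy ^ 2 + 16 * Lyy ^ 2)) := by ring
        _ = ((1 - β) * μy * (T - 1)) ^ 2 := by rw [hT2']; ring
        _ = (u * (4 * Lyy)) ^ 2 := by rw [ht]
        _ = (16 * Lyy ^ 2) * u ^ 2 := by ring
    exact mul_left_cancel₀ (by positivity) h16
  case refine_1 =>
    -- u < 1, derived from the quadratic identity
    set u := (1 - β) * μy / (4 * Lyy) * (T - 1) with hudef
    have ht : u * (4 * Lyy) = (1 - β) * μy * (T - 1) := by rw [hudef]; field_simp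
    have hu0 : 0 < u := by rw [hudef]; exact mul_pos (by positivity) (by linarith)
    have h8 : (8 * Lyy) * (2 * Lyy * u ^ 2 + (1 - β) * μy * u) = (8 * Lyy) * (2 * Lyy) := by
      calc (8 * Lyy) * (2 * Lyy * u ^ 2 + (1 - β) * μy * u)
          = (u * (4 * Lyy)) ^ 2 + 2 * ((1 - β) * μy) * (u * (4 * Lyy)) := by ring
        _ = ((1 - β) * μy * (T - 1)) ^ 2 + 2 * ((1 - β) * μy) * ((1 - β) * μy * (T - 1)) := by
            rw [ht]
        _ = T ^ 2 * ((1 - β) ^ 2 * μy ^ 2) - (1 - β) ^ 2 * μy ^ 2 := by ring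
        _ = (1 - β) ^ 2 * μy ^ 2 + 16 * Lyy ^ 2 - (1 - β) ^ 2 * μy ^ 2 := by rw [hT2']
        _ = (8 * Lyy) * (2 * Lyy) := by ring
    have hkey2 : 2 * Lyy * u ^ 2 + (1 - β) * μy * u = 2 * Lyy :=
      mul_left_cancel₀ (by positivity) h8
    nlinarith [hkey2, sq_nonneg (u - 1), mul_pos (mul_pos h1β hμy) hu0, hu0, hLyy]

private lemma aux_part3 (μy Lyy β u θ : ℝ)
    (hμy : 0 < μy) (hLyy : 0 < Lyy) (h1β : 0 < 1 - β) (hu0 : 0 < u)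
    (hkey2 : 2 * Lyy * u ^ 2 + (1 - β) * μy * u = 2 * Lyy)
    (hθl : u ^ 2 ≤ θ) (hθu : θ < 1) :
    2 * Lyy / μy * ((1 - θ) / Real.sqrt θ) ≤ 1 - β := by
  have hθ0 : 0 < θ := lt_of_lt_of_le (by positivity) hθl
  have hsq : Real.sqrt θ ^ 2 = θ := Real.sq_sqrt hθ0.le
  have hsp : 0 < Real.sqrt θ := Real.sqrt_pos.mpr hθ0
  have hsθ : u ≤ Real.sqrt θ := by nlinarith [hsq, hsp, hu0]
  have key3 : 2 * Lyy ≤ 2 * Lyy * θ + (1 - β) * μy * Real.sqrt θ := by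
    nlinarith [hkey2, mul_nonneg (sub_nonneg.mpr hsθ)
      (by linarith : (0:ℝ) ≤ Real.sqrt θ + u), hsq, mul_pos h1β hμy]
  have hrw : 2 * Lyy / μy * ((1 - θ) / Real.sqrt θ) = 2 * Lyy * (1 - θ) / (μy * Real.sqrt θ) := by
    ring
  rw [hrw, div_le_iff₀ (by positivity)]
  nlinarith [key3]

private lemma aux_part4 (μx μy Lxx Lyx β t θ : ℝ)
    (hμx : 0 < μx) (hμy : 0 < μy) (hLxx : 0 ≤ Lxx) (hLyx : 0 < Lyx)
    (hβ0 : 0 < β) (ht0 : 0 < t)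
    (hkey : Lyx ^ 2 * t ^ 2 + (Lxx + μx) * (β * μy) * t = μx * (β * μy))
    (hθl : 1 - t ≤ θ) (hθu : θ < 1) :
    θ * μx / (1 - θ) - Lxx ≥ (1 - θ) * Lyx ^ 2 / (β * μy) := by
  have hβμy : 0 < β * μy := mul_pos hβ0 hμy
  have h01 : 0 < 1 - θ := by linarith
  have hle : 1 - θ ≤ t := by linarith
  have hsq' : (1 - θ) ^ 2 ≤ t ^ 2 := pow_le_pow_left₀ h01.le hle 2
  have hq : 0 < Lxx + μx := by linarith
  have key4 : Lyx ^ 2 * (1 - θ) ^ 2 + (Lxx + μx) * (β * μy) * (1 - θ) ≤ μx * (β * μy) := by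
    nlinarith [hkey, hsq', hle, sq_nonneg Lyx, mul_pos hβμy hq]
  have hEq : θ * μx / (1 - θ) - Lxx - (1 - θ) * Lyx ^ 2 / (β * μy) =
      (μx * (β * μy) - (Lxx + μx) * (β * μy) * (1 - θ) - Lyx ^ 2 * (1 - θ) ^ 2) /
        ((1 - θ) * (β * μy)) := by
    field_simp
    ring
  have h0 : 0 ≤ θ * μx / (1 - θ) - Lxx - (1 - θ) * Lyx ^ 2 / (β * μy) := by
    rw [hEq]
    exact div_nonneg (by linarith) (by positivity)
  linarith

/-- Properties of the thresholds `θ̄₁` and `θ̄₂` used in the SAPD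
parameter selection (Corollary 2.5). -/
theorem theta_bar_properties
    (μx μy Lxx Lyy Lyx β : ℝ)
    (hμx : 0 < μx) (hμy : 0 < μy) (hLxx : 0 ≤ Lxx) (hLyy : 0 < Lyy) (hLyx : 0 < Lyx)
    (hβ0 : 0 < β) (hβ1 : β < 1) :
    (0 < 1 - β * (Lxx + μx) * μy / (2 * Lyx ^ 2) *
          (Real.sqrt (1 + 4 * μx * Lyx ^ 2 / (β * μy * (Lxx + μx) ^ 2)) - 1) ∧
        1 - β * (Lxx + μx) * μy / (2 * Lyx ^ 2) *
          (Real.sqrt (1 + 4 * μx * Lyx ^ 2 / (β * μy * (Lxx + μx) ^ 2)) - 1) < 1) ∧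
    (0 < 1 - (1 - β) ^ 2 / 8 * (μy ^ 2 / Lyy ^ 2) *
          (Real.sqrt (1 + 16 * Lyy ^ 2 / ((1 - β) ^ 2 * μy ^ 2)) - 1) ∧
        1 - (1 - β) ^ 2 / 8 * (μy ^ 2 / Lyy ^ 2) *
          (Real.sqrt (1 + 16 * Lyy ^ 2 / ((1 - β) ^ 2 * μy ^ 2)) - 1) < 1) ∧
    (∀ θ : ℝ,
        1 - (1 - β) ^ 2 / 8 * (μy ^ 2 / Lyy ^ 2) *
            (Real.sqrt (1 + 16 * Lyy ^ 2 / ((1 - β) ^ 2 * μy ^ 2)) - 1) ≤ θ → θ < 1 →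
        2 * Lyy / μy * ((1 - θ) / Real.sqrt θ) ≤ 1 - β) ∧
    (∀ θ : ℝ,
        1 - β * (Lxx + μx) * μy / (2 * Lyx ^ 2) *
            (Real.sqrt (1 + 4 * μx * Lyx ^ 2 / (β * μy * (Lxx + μx) ^ 2)) - 1) ≤ θ → θ < 1 →
        θ * μx / (1 - θ) - Lxx ≥ (1 - θ) * Lyx ^ 2 / (β * μy)) := by
  obtain ⟨ht0, ht1, hkey⟩ := aux_fam1 μx μy Lxx Lyx β hμx hμy hLxx hLyx hβ0 hβ1
  obtain ⟨u, hu0, hu1, hkey2, hidD⟩ := aux_fam2 μy Lyy β hμy hLyy hβ0 hβ1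
  have h1β : 0 < 1 - β := by linarith
  have hu2 : u ^ 2 < 1 := by nlinarith [hu0, hu1]
  have hu2' : 0 < u ^ 2 := by positivity
  refine ⟨⟨by linarith, by linarith⟩, ⟨by linarith [hidD], by linarith [hidD]⟩, ?_, ?_⟩
  · intro θ hθl hθu
    exact aux_part3 μy Lyy β u θ hμy hLyy h1β hu0 hkey2 (by linarith [hidD]) hθu
  · intro θ hθl hθu
    exact aux_part4 μx μy Lxx Lyx β _ θ hμx hμy hLxx hLyx hβ0 ht0 hkey hθl hθu
end

section
/- Let μ_x, μ_y > 0, L_{xx}, L_{yy} ≥ 0, L_{yx} > 0. Define θ̄₁ : [0,1] → ℝ by θ̄₁(β) = 1 − (β(L_{xx}+μ_x)μ_y)/(2L_{yx}²)(√(1 + 4μ_x L_{yx}²/(β μ_y (L_{xx}+μ_x)²)) − 1) and θ̄₂ : [0,1] → ℝ by θ̄₂(β) = 1 − ((1−β)²/8)(μ_y²/L_{yy}²)(√(1 + 16 L_{yy}²/((1−β)²μ_y²)) − 1), with θ̄₁(0) = θ̄₂(1) = 1 by continuous extension, and L_{yy} > 0. Then θ̄₁ is monotonically decreasing, θ̄₂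 is monotonically increasing, θ̄₁(0) = 1 > θ̄₂(0), θ̄₂(1) = 1 > θ̄₁(1), and consequently there exists a unique β* ∈ (0,1) with θ̄₁(β*) = θ̄₂(β*), at which max{θ̄₁, θ̄₂} attains its minimum over βᵢ ∈ (0,1). -/
/-!
Both thresholds are `1 - c · sqrtGap K t` with `c > 0`, `K > 0` and
`sqrtGap K t = √(t² + K t) - t`: `θ̄₁` at `t = β`, and `θ̄₂` at `t = (1 - β)² μ_y² / L_yy²`,
which decreases in `β ≤ 1`. For `0 ≤ a < b`, `A = a² + K a`, `B = b² + K b`, one has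
`(√B - √A)(√B + √A) = (b - a)(a + b + K)` and `√A + √B < a + b + K`, so `√B - √A > b - a`:
`sqrtGap K` increases strictly on `[0, ∞)`. Hence `θ̄₁` decreases and `θ̄₂` increases; the
boundary values and the intermediate value theorem give a crossing, strict monotonicity its
uniqueness, and away from a crossing `θ̄₁` is larger on the left and `θ̄₂` on the right.
-/

/-- The threshold `θ̄₁` as a function of `β`; at `β = 0` the formula continuously extends
to `1`, which agrees with Lean's division-by-zero convention. -/
noncomputable def thetaBar1 (μx μy Lxx Lyx : ℝ) (β : ℝ) : ℝ :=
  1 - β * (Lxx + μx) * μy / (2 * Lyx ^ 2) *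
      (Real.sqrt (1 + 4 * μx * Lyx ^ 2 / (β * μy * (Lxx + μx) ^ 2)) - 1)

/-- The threshold `θ̄₂` as a function of `β`; at `β = 1` the formula continuously extends
to `1`, which agrees with Lean's division-by-zero convention. -/
noncomputable def thetaBar2 (μy Lyy : ℝ) (β : ℝ) : ℝ :=
  1 - (1 - β) ^ 2 / 8 * (μy ^ 2 / Lyy ^ 2) *
      (Real.sqrt (1 + 16 * Lyy ^ 2 / ((1 - β) ^ 2 * μy ^ 2)) - 1)

open Set

noncomputable def sqrtGap (K x : ℝ) : ℝ := Real.sqrt (x ^ 2 + K * x) - x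

lemma continuous_sqrtGap (K : ℝ) : Continuous (sqrtGap K) := by
  unfold sqrtGap
  fun_prop

lemma sqrtGap_eq_mul {K x : ℝ} (hx : 0 ≤ x) :
    sqrtGap K x = x * (Real.sqrt (1 + K / x) - 1) := by
  rcases hx.eq_or_lt with rfl | hx
  · simp [sqrtGap]
  · have : x ^ 2 + K * x = x ^ 2 * (1 + K / x) := by field_simp
    rw [sqrtGap, this, Real.sqrt_mul (sq_nonneg x), Real.sqrt_sq hx.le]
    ring

lemma strictMonoOn_sqrtGap {K : ℝ} (hK : 0 < K) : StrictMonoOn (sqrtGap K) (Ici 0) := by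
  intro a ha b hb hab
  rw [mem_Ici] at ha hb
  have sqrt_lt {x : ℝ} (hx : 0 ≤ x) : Real.sqrt (x ^ 2 + K * x) < x + K / 2 := by
    rw [Real.sqrt_lt' (by linarith)]
    nlinarith
  set sa := Real.sqrt (a ^ 2 + K * a)
  set sb := Real.sqrt (b ^ 2 + K * b)
  have hsa : sa ^ 2 = a ^ 2 + K * a := Real.sq_sqrt (by positivity)
  have hsb : sb ^ 2 = b ^ 2 + K * b := Real.sq_sqrt (by positivity)
  have hsb_pos : 0 < sb := Real.sqrt_pos.2 (by nlinarith)
  have hprod : (sb - sa) * (sb + sa) = (b - a) * (a + b + K) := by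
    linear_combination hsb - hsa
  have hsum : sb + sa < a + b + K := by linarith [sqrt_lt ha, sqrt_lt hb]
  show sa - a < sb - b
  nlinarith [Real.sqrt_nonneg (a ^ 2 + K * a)]

lemma thetaBar1_eq_sqrtGap (μx μy Lxx Lyx : ℝ) {β : ℝ} (hβ : 0 ≤ β) :
    thetaBar1 μx μy Lxx Lyx β = 1 - (Lxx + μx) * μy / (2 * Lyx ^ 2) *
      sqrtGap (4 * μx * Lyx ^ 2 / (μy * (Lxx + μx) ^ 2)) β := by
  rw [sqrtGap_eq_mul hβ, thetaBar1, div_div, mul_comm _ β, ← mul_assoc β]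
  ring

lemma thetaBar2_eq_sqrtGap (μy Lyy β : ℝ) :
    thetaBar2 μy Lyy β = 1 - sqrtGap 16 ((1 - β) ^ 2 * μy ^ 2 / Lyy ^ 2) / 8 := by
  rw [sqrtGap_eq_mul (by positivity), thetaBar2, div_div_eq_mul_div]
  ring

section

variable {μx μy Lxx Lyy Lyx : ℝ}

lemma strictAntiOn_thetaBar1 (hμx : 0 < μx) (hμy : 0 < μy) (hLxx : 0 ≤ Lxx) (hLyx : 0 < Lyx) :
    StrictAntiOn (thetaBar1 μx μy Lxx Lyx) (Ici 0) := by
  intro a ha b hb hab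
  have hA : 0 < (Lxx + μx) * μy / (2 * Lyx ^ 2) := by positivity
  have hK : 0 < 4 * μx * Lyx ^ 2 / (μy * (Lxx + μx) ^ 2) := by positivity
  rw [thetaBar1_eq_sqrtGap _ _ _ _ ha, thetaBar1_eq_sqrtGap _ _ _ _ hb]
  have := mul_lt_mul_of_pos_left (strictMonoOn_sqrtGap hK ha hb hab) hA
  linarith

lemma strictMonoOn_thetaBar2 (hμy : 0 < μy) (hLyy : 0 < Lyy) :
    StrictMonoOn (thetaBar2 μy Lyy) (Iic 1) := by
  have hscale : StrictAntiOn (fun β : ℝ => (1 - β) ^ 2 * μy ^ 2 / Lyy ^ 2) (Iic 1) := by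
    intro a ha b hb hab
    rw [mem_Iic] at ha hb
    have : (1 - b) ^ 2 < (1 - a) ^ 2 := by nlinarith
    simp only [mul_div_assoc]
    exact mul_lt_mul_of_pos_right this (by positivity)
  have hgap := (strictMonoOn_sqrtGap (by norm_num : (0 : ℝ) < 16)).comp_strictAntiOn hscale
    (fun β _ => mem_Ici.2 (by positivity))
  intro a ha b hb hab
  rw [thetaBar2_eq_sqrtGap, thetaBar2_eq_sqrtGap]
  have := hgap ha hb hab
  simp only [Function.comp_apply] at this
  linarith

lemma continuousOn_thetaBar1 : ContinuousOn (thetaBar1 μx μy Lxx Lyx) (Ici 0) :=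
  ((continuous_const.sub (continuous_const.mul (continuous_sqrtGap _))).continuousOn).congr
    fun _ hβ => thetaBar1_eq_sqrtGap μx μy Lxx Lyx hβ

lemma continuous_thetaBar2 : Continuous (thetaBar2 μy Lyy) := by
  simp only [funext (thetaBar2_eq_sqrtGap μy Lyy)]
  exact continuous_const.sub (((continuous_sqrtGap 16).comp (by fun_prop)).div_const 8)

lemma thetaBar1_zero : thetaBar1 μx μy Lxx Lyx 0 = 1 := by
  simp [thetaBar1]

lemma thetaBar2_one : thetaBar2 μy Lyy 1 = 1 := by
  simp [thetaBar2]

end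

lemma exists_unique_eq_of_strictAntiOn_of_strictMonoOn {f g : ℝ → ℝ} {a b : ℝ} (hab : a ≤ b)
    (hf : StrictAntiOn f (Icc a b)) (hg : StrictMonoOn g (Icc a b))
    (hfc : ContinuousOn f (Icc a b)) (hgc : ContinuousOn g (Icc a b))
    (ha : g a < f a) (hb : f b < g b) :
    ∃! c, c ∈ Ioo a b ∧ f c = g c := by
  obtain ⟨c, hc, hfgc⟩ := intermediate_value_Ioo' hab (hfc.sub hgc)
    (show (0 : ℝ) ∈ Ioo (f b - g b) (f a - g a) from ⟨by linarith, by linarith⟩)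
  refine ⟨c, ⟨hc, sub_eq_zero.1 hfgc⟩, fun d ⟨hd, hfgd⟩ => ?_⟩
  have hfg_anti : StrictAntiOn (f - g) (Icc a b) := fun x hx y hy hxy => by
    simp only [Pi.sub_apply]
    linarith [hf hx hy hxy, hg hx hy hxy]
  exact hfg_anti.injOn (Ioo_subset_Icc_self hd) (Ioo_subset_Icc_self hc)
    (by simp only [Pi.sub_apply, hfgd, sub_self, hfgc])

lemma max_le_max_of_eq_of_antitoneOn_of_monotoneOn {f g : ℝ → ℝ} {s : Set ℝ}
    (hf : AntitoneOn f s) (hg : MonotoneOn g s) {c x : ℝ} (hc : c ∈ s) (hx : x ∈ s)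
    (hfgc : f c = g c) : max (f c) (g c) ≤ max (f x) (g x) := by
  rw [← hfgc, max_self]
  rcases le_total x c with hxc | hcx
  · exact le_max_of_le_left (hf hx hc hxc)
  · exact le_max_of_le_right (hfgc ▸ hg hc hx hcx)

/-- `θ̄₁` is decreasing, `θ̄₂` is increasing on `[0,1]`, with the stated
boundary values, so there is a unique crossing point `β* ∈ (0,1)`, at which
`max{θ̄₁, θ̄₂}` attains its minimum over `(0,1)`. -/
theorem theta_bar_crossing
    (μx μy Lxx Lyy Lyx : ℝ)
    (hμx : 0 < μx) (hμy : 0 < μy) (hLxx : 0 ≤ Lxx) (hLyy : 0 < Lyy) (hLyx : 0 < Lyx) :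
    StrictAntiOn (thetaBar1 μx μy Lxx Lyx) (Set.Icc 0 1) ∧
    StrictMonoOn (thetaBar2 μy Lyy) (Set.Icc 0 1) ∧
    thetaBar1 μx μy Lxx Lyx 0 = 1 ∧
    thetaBar2 μy Lyy 0 < 1 ∧
    thetaBar2 μy Lyy 1 = 1 ∧
    thetaBar1 μx μy Lxx Lyx 1 < 1 ∧
    (∃! b : ℝ, b ∈ Set.Ioo (0 : ℝ) 1 ∧ thetaBar1 μx μy Lxx Lyx b = thetaBar2 μy Lyy b) ∧
    (∀ b ∈ Set.Ioo (0 : ℝ) 1, thetaBar1 μx μy Lxx Lyx b = thetaBar2 μy Lyy b →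
      ∀ β ∈ Set.Ioo (0 : ℝ) 1,
        max (thetaBar1 μx μy Lxx Lyx b) (thetaBar2 μy Lyy b) ≤
          max (thetaBar1 μx μy Lxx Lyx β) (thetaBar2 μy Lyy β)) := by
  have hanti : StrictAntiOn (thetaBar1 μx μy Lxx Lyx) (Icc 0 1) :=
    (strictAntiOn_thetaBar1 hμx hμy hLxx hLyx).mono Icc_subset_Ici_self
  have hmono : StrictMonoOn (thetaBar2 μy Lyy) (Icc 0 1) :=
    (strictMonoOn_thetaBar2 hμy hLyy).mono Icc_subset_Iic_self
  have h0 : (0 : ℝ) ∈ Icc 0 1 := left_mem_Icc.2 zero_le_one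
  have h1 : (1 : ℝ) ∈ Icc 0 1 := right_mem_Icc.2 zero_le_one
  have hθ₁ : thetaBar1 μx μy Lxx Lyx 1 < 1 := (hanti h0 h1 one_pos).trans_eq thetaBar1_zero
  have hθ₂ : thetaBar2 μy Lyy 0 < 1 := (hmono h0 h1 one_pos).trans_eq thetaBar2_one
  refine ⟨hanti, hmono, thetaBar1_zero, hθ₂, thetaBar2_one, hθ₁,
    exists_unique_eq_of_strictAntiOn_of_strictMonoOn zero_le_one hanti hmono
      (continuousOn_thetaBar1.mono Icc_subset_Ici_self) continuous_thetaBar2.continuousOn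
      (by rwa [thetaBar1_zero]) (by rwa [thetaBar2_one]),
    fun b hb hcross β hβ => max_le_max_of_eq_of_antitoneOn_of_monotoneOn
      hanti.antitoneOn hmono.monotoneOn (Ioo_subset_Icc_self hb) (Ioo_subset_Icc_self hβ) hcross⟩
end

section
/- Let μ_x, μ_y > 0, L_{xx}, L_{yy} ≥ 0, L_{xy}, L_{yx} > 0, and ρ ∈ (0,1). For τ > 0 define S_ρ(τ) as the set of triples (σ, θ, α) with σ > 0, θ ≥ 0, α ∈ [0, 1/σ) for which the 5×5 matrix G(τ,σ,θ,α,ρ) (with diagonal (1/τ + μ_x − 1/(ρτ), 1/σ + μ_y − 1/(ρσ), 1/τ − L_{xx}, 1/σ − α, α/ρ) and off-diagonals G(2,3) = (θ/ρ−1)L_{yx}, G(2,4) = (θ/ρ−1)L_{yy}, G(3,5) = −(θ/ρ)L_{yx}, G(4,5) = −(θ/ρ)L_{yy}, zeros elsewhere) is positive semidefinite. Suppose ∪_{τ>0} S_ρ(τ) ≠ ∅. Then: (i) min{τ > 0 : S_ρ(τ) ≠ ∅} = (1−ρ)/(μ_x ρ); (ii) for all τ₁ ≥ τ₂ ≥ (1−ρ)/(μ_x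 ρ), S_ρ(τ₁) ⊆ S_ρ(τ₂). -/
/-- The admissible parameter set `S_ρ(τ)` of triples `(σ, θ, α)`. -/
noncomputable def sapdS (Lxx Lyy Lyx μx μy ρ : ℝ) (τ : ℝ) : Set (ℝ × ℝ × ℝ) :=
  {p | 0 < p.1 ∧ 0 ≤ p.2.1 ∧ 0 ≤ p.2.2 ∧ p.2.2 < 1 / p.1 ∧
    (sapdG Lxx Lyy Lyx μx μy τ p.1 p.2.1 p.2.2 ρ).PosSemidef}

open Matrix

section SapdG

variable {Lxx Lyy Lyx μx μy τ σ θ α ρ : ℝ}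

lemma sapdG_apply_zero_zero_nonneg_iff (hμx : 0 < μx) (hρ : 0 < ρ) (hτ : 0 < τ) :
    0 ≤ sapdG Lxx Lyy Lyx μx μy τ σ θ α ρ 0 0 ↔ (1 - ρ) / (μx * ρ) ≤ τ := by
  have hcorner : sapdG Lxx Lyy Lyx μx μy τ σ θ α ρ 0 0 =
      (τ * (μx * ρ) - (1 - ρ)) / (ρ * τ) := by
    simp only [sapdG, of_apply, cons_val', cons_val_zero, empty_val', cons_val_fin_one]
    field_simp
    ring
  rw [hcorner, le_div_iff₀ (by positivity), zero_mul, sub_nonneg, div_le_iff₀ (by positivity)]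

lemma le_of_sapdG_posSemidef (hμx : 0 < μx) (hρ : 0 < ρ) (hτ : 0 < τ)
    (hG : (sapdG Lxx Lyy Lyx μx μy τ σ θ α ρ).PosSemidef) :
    (1 - ρ) / (μx * ρ) ≤ τ :=
  (sapdG_apply_zero_zero_nonneg_iff hμx hρ hτ).1 hG.diag_nonneg

lemma sapdG_eq_conjTranspose_mul_mul_add_diagonal (τ' : ℝ) :
    sapdG Lxx Lyy Lyx μx μy τ σ θ α ρ =
      (diagonal ![0, 1, 1, 1, 1])ᴴ * sapdG Lxx Lyy Lyx μx μy τ' σ θ α ρ *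
          diagonal ![0, 1, 1, 1, 1] +
        diagonal ![sapdG Lxx Lyy Lyx μx μy τ σ θ α ρ 0 0, 0, 1 / τ - 1 / τ', 0, 0] := by
  ext i j
  fin_cases i <;> fin_cases j <;> simp [sapdG]

lemma sapdG_posSemidef_of_le {τ' : ℝ} (hμx : 0 < μx) (hρ : 0 < ρ) (hτ : 0 < τ)
    (hle : (1 - ρ) / (μx * ρ) ≤ τ) (hττ' : τ ≤ τ')
    (hG : (sapdG Lxx Lyy Lyx μx μy τ' σ θ α ρ).PosSemidef) :
    (sapdG Lxx Lyy Lyx μx μy τ σ θ α ρ).PosSemidef := by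
  have hcorner : 0 ≤ sapdG Lxx Lyy Lyx μx μy τ σ θ α ρ 0 0 :=
    (sapdG_apply_zero_zero_nonneg_iff hμx hρ hτ).2 hle
  have hinv : τ'⁻¹ ≤ τ⁻¹ := inv_anti₀ hτ hττ'
  rw [sapdG_eq_conjTranspose_mul_mul_add_diagonal τ']
  refine (hG.conjTranspose_mul_mul_same _).add (.diagonal fun i => ?_)
  fin_cases i <;> simp [hcorner, hinv]

end SapdG

lemma sapdS_subset_of_le {Lxx Lyy Lyx μx μy ρ τ₁ τ₂ : ℝ} (hμx : 0 < μx) (hρ : 0 < ρ)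
    (hτ₂ : 0 < τ₂) (hle : (1 - ρ) / (μx * ρ) ≤ τ₂) (h21 : τ₂ ≤ τ₁) :
    sapdS Lxx Lyy Lyx μx μy ρ τ₁ ⊆ sapdS Lxx Lyy Lyx μx μy ρ τ₂ := by
  rintro ⟨σ, θ, α⟩ ⟨hσ, hθ, hα, hασ, hG⟩
  exact ⟨hσ, hθ, hα, hασ, sapdG_posSemidef_of_le hμx hρ hτ₂ hle h21 hG⟩

theorem sapdS_monotone_general
    (Lxx Lyy Lyx μx μy ρ : ℝ)
    (hμx : 0 < μx) (hρ0 : 0 < ρ) (hρ1 : ρ < 1)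
    (hne : ∃ τ : ℝ, 0 < τ ∧ (sapdS Lxx Lyy Lyx μx μy ρ τ).Nonempty) :
    IsLeast {τ : ℝ | 0 < τ ∧ (sapdS Lxx Lyy Lyx μx μy ρ τ).Nonempty}
      ((1 - ρ) / (μx * ρ)) ∧
    (∀ τ₁ τ₂ : ℝ, (1 - ρ) / (μx * ρ) ≤ τ₂ → τ₂ ≤ τ₁ →
      sapdS Lxx Lyy Lyx μx μy ρ τ₁ ⊆ sapdS Lxx Lyy Lyx μx μy ρ τ₂) := by
  have hpos : 0 < (1 - ρ) / (μx * ρ) := div_pos (sub_pos.2 hρ1) (by positivity)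
  have hmono : ∀ τ₁ τ₂ : ℝ, (1 - ρ) / (μx * ρ) ≤ τ₂ → τ₂ ≤ τ₁ →
      sapdS Lxx Lyy Lyx μx μy ρ τ₁ ⊆ sapdS Lxx Lyy Lyx μx μy ρ τ₂ := fun _ _ hle h21 =>
    sapdS_subset_of_le hμx hρ0 (hpos.trans_le hle) hle h21
  have hlower : (1 - ρ) / (μx * ρ) ∈
      lowerBounds {τ : ℝ | 0 < τ ∧ (sapdS Lxx Lyy Lyx μx μy ρ τ).Nonempty} := by
    rintro τ ⟨hτ, _, -, -, -, -, hG⟩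
    exact le_of_sapdG_posSemidef hμx hρ0 hτ hG
  obtain ⟨τ, hτ, p, hp⟩ := hne
  exact ⟨⟨⟨hpos, p, hmono τ _ le_rfl (hlower ⟨hτ, p, hp⟩) hp⟩, hlower⟩, hmono⟩

/-- Lemma on monotonicity of the admissible set in `τ`:
(i) the smallest `τ > 0` with `S_ρ(τ) ≠ ∅` is `(1−ρ)/(μxρ)`;
(ii) `S_ρ(τ₁) ⊆ S_ρ(τ₂)` whenever `τ₁ ≥ τ₂ ≥ (1−ρ)/(μxρ)`. -/
theorem sapdS_monotone
    (Lxx Lyy Lyx Lxy μx μy ρ : ℝ)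
    (hLxx : 0 ≤ Lxx) (hLyy : 0 ≤ Lyy) (hLyx : 0 < Lyx) (hLxy : 0 < Lxy)
    (hμx : 0 < μx) (hμy : 0 < μy) (hρ0 : 0 < ρ) (hρ1 : ρ < 1)
    (hne : ∃ τ : ℝ, 0 < τ ∧ (sapdS Lxx Lyy Lyx μx μy ρ τ).Nonempty) :
    IsLeast {τ : ℝ | 0 < τ ∧ (sapdS Lxx Lyy Lyx μx μy ρ τ).Nonempty}
      ((1 - ρ) / (μx * ρ)) ∧
    (∀ τ₁ τ₂ : ℝ, (1 - ρ) / (μx * ρ) ≤ τ₂ → τ₂ ≤ τ₁ →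
      sapdS Lxx Lyy Lyx μx μy ρ τ₁ ⊆ sapdS Lxx Lyy Lyx μx μy ρ τ₂) :=
  sapdS_monotone_general Lxx Lyy Lyx μx μy ρ hμx hρ0 hρ1 hne
end

section
/- Let ρ ∈ (0,1) and constants as above, and for c ∈ (0,1) let L_c = {(t,s,θ,α) ∈ ℝ⁴₊ : α = c·s} and 𝒫_ρ = {(t,s,θ,α) ∈ ℝ⁴₊ : α ≤ s and G_ρ(t,s,θ,α) ⪰ 0}, where G_ρ(t,s,θ,α) is the 5×5 symmetric matrix with diagonal ((1−1/ρ)t + μ_x, (1−1/ρ)s + μ_y, t − L_{xx}, s − α, α/ρ) and off-diagonals (2,3)-entry (θ/ρ−1)L_{yx}, (2,4)-entry (θ/ρ−1)L_{yy}, (3,5)-entry −(θ/ρ)L_{yx}, (4,5)-entry −(θ/ρ)L_{yy}, zeros elsewhere. Define 𝒞_ρ = {c ∈ (0,1) : 𝒫_ρ ∩ L_c ≠ ∅}. Then 𝒞_ρ is a convex subset of (0,1): if c₁, c₂ ∈ 𝒞_ρ and β ∈ [0,1], then βc₁ + (1−β)c₂ ∈ 𝒞_ρ. -/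
/-!
`G_ρ` is affine in `(t, s, θ, α)` and the positive semidefinite matrices form a convex cone,
so `𝒫_ρ` is convex. Points of `𝒫_ρ` on the slices `α = c₁ s` and `α = c₂ s` therefore have
convex combinations in `𝒫_ρ`, and the combination with weights proportional to
`β s₂ : (1 - β) s₁` lies on the slice `α = (β c₁ + (1 - β) c₂) s`.
-/

/-- The 5×5 matrix `G_ρ(t,s,θ,α)` (the SAPD matrix inequality in the variables
`t = 1/τ`, `s = 1/σ`). -/
noncomputable def sapdGrho (Lxx Lyy Lyx μx μy ρ : ℝ) (t s θ α : ℝ) :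
    Matrix (Fin 5) (Fin 5) ℝ :=
  !![(1 - 1 / ρ) * t + μx, 0, 0, 0, 0;
     0, (1 - 1 / ρ) * s + μy, (θ / ρ - 1) * Lyx, (θ / ρ - 1) * Lyy, 0;
     0, (θ / ρ - 1) * Lyx, t - Lxx, 0, -(θ / ρ) * Lyx;
     0, (θ / ρ - 1) * Lyy, 0, s - α, -(θ / ρ) * Lyy;
     0, 0, -(θ / ρ) * Lyx, -(θ / ρ) * Lyy, α / ρ]

/-- The feasible set `𝒫_ρ ⊆ ℝ⁴₊`. -/
noncomputable def sapdP (Lxx Lyy Lyx μx μy ρ : ℝ) : Set (ℝ × ℝ × ℝ × ℝ) :=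
  {p | 0 ≤ p.1 ∧ 0 ≤ p.2.1 ∧ 0 ≤ p.2.2.1 ∧ 0 ≤ p.2.2.2 ∧ p.2.2.2 ≤ p.2.1 ∧
    (sapdGrho Lxx Lyy Lyx μx μy ρ p.1 p.2.1 p.2.2.1 p.2.2.2).PosSemidef}

open scoped ComplexOrder in
theorem Matrix.convex_setOf_posSemidef {n 𝕜 : Type*} [Fintype n] [RCLike 𝕜] :
    Convex ℝ {A : Matrix n n 𝕜 | A.PosSemidef} :=
  fun _ hA _ hB _ _ ha hb _ => (hA.smul ha).add (hB.smul hb)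

theorem sapdGrho_convexComb (Lxx Lyy Lyx μx μy ρ : ℝ) {a b : ℝ} (hab : a + b = 1)
    (t₁ s₁ θ₁ α₁ t₂ s₂ θ₂ α₂ : ℝ) :
    sapdGrho Lxx Lyy Lyx μx μy ρ (a * t₁ + b * t₂) (a * s₁ + b * s₂)
        (a * θ₁ + b * θ₂) (a * α₁ + b * α₂)
      = a • sapdGrho Lxx Lyy Lyx μx μy ρ t₁ s₁ θ₁ α₁
        + b • sapdGrho Lxx Lyy Lyx μx μy ρ t₂ s₂ θ₂ α₂ := by
  obtain rfl : b = 1 - a := by linarith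
  ext i j
  fin_cases i <;> fin_cases j <;> simp [sapdGrho] <;> ring

theorem convex_sapdP (Lxx Lyy Lyx μx μy ρ : ℝ) : Convex ℝ (sapdP Lxx Lyy Lyx μx μy ρ) := by
  rintro ⟨t₁, s₁, θ₁, α₁⟩ ⟨ht₁, hs₁, hθ₁, hα₁, hαs₁, hG₁⟩ ⟨t₂, s₂, θ₂, α₂⟩
    ⟨ht₂, hs₂, hθ₂, hα₂, hαs₂, hG₂⟩ a b ha hb hab
  simp only [sapdP, Set.mem_ofPred_eq, Prod.smul_mk, Prod.mk_add_mk, smul_eq_mul,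
    sapdGrho_convexComb _ _ _ _ _ _ hab]
  refine ⟨by positivity, by positivity, by positivity, by positivity, ?_,
    Matrix.convex_setOf_posSemidef hG₁ hG₂ ha hb hab⟩
  gcongr

/-- Witness: `λ = β s₂ / ((1 - β) s₁ + β s₂)`, or `λ = 0` when the denominator vanishes. -/
theorem exists_mix_eq_mul_mix {s₁ s₂ β : ℝ} (c₁ c₂ : ℝ) (hs₁ : 0 ≤ s₁) (hs₂ : 0 ≤ s₂)
    (hβ0 : 0 ≤ β) (hβ1 : β ≤ 1) :
    ∃ l, 0 ≤ l ∧ l ≤ 1 ∧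
      l * (c₁ * s₁) + (1 - l) * (c₂ * s₂) = (β * c₁ + (1 - β) * c₂) * (l * s₁ + (1 - l) * s₂) := by
  have h₁ : 0 ≤ (1 - β) * s₁ := mul_nonneg (by linarith) hs₁
  have h₂ : 0 ≤ β * s₂ := mul_nonneg hβ0 hs₂
  rcases (add_nonneg h₁ h₂).eq_or_lt with hD | hD
  · refine ⟨0, le_rfl, zero_le_one, ?_⟩
    have hβs₂ : β * s₂ = 0 := by linarith
    linear_combination (c₂ - c₁) * hβs₂
  · refine ⟨β * s₂ / ((1 - β) * s₁ + β * s₂), by positivity,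
      (div_le_one hD).2 (by linarith), ?_⟩
    field_simp
    ring

theorem C_rho_convex_general
    (Lxx Lyy Lyx μx μy ρ : ℝ) :
    ∀ c₁ ∈ {c : ℝ | c ∈ Set.Ioo (0 : ℝ) 1 ∧
        ∃ p ∈ sapdP Lxx Lyy Lyx μx μy ρ, p.2.2.2 = c * p.2.1},
      ∀ c₂ ∈ {c : ℝ | c ∈ Set.Ioo (0 : ℝ) 1 ∧
        ∃ p ∈ sapdP Lxx Lyy Lyx μx μy ρ, p.2.2.2 = c * p.2.1},
      ∀ β : ℝ, 0 ≤ β → β ≤ 1 →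
        β * c₁ + (1 - β) * c₂ ∈ {c : ℝ | c ∈ Set.Ioo (0 : ℝ) 1 ∧
          ∃ p ∈ sapdP Lxx Lyy Lyx μx μy ρ, p.2.2.2 = c * p.2.1} := by
  rintro c₁ ⟨hc₁, p₁, hp₁, hsl₁⟩ c₂ ⟨hc₂, p₂, hp₂, hsl₂⟩ β hβ0 hβ1
  obtain ⟨l, hl0, hl1, hmix⟩ := exists_mix_eq_mul_mix c₁ c₂ hp₁.2.1 hp₂.2.1 hβ0 hβ1
  refine ⟨convex_Ioo 0 1 hc₁ hc₂ hβ0 (sub_nonneg.2 hβ1) (add_sub_cancel β 1),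
    l • p₁ + (1 - l) • p₂,
    convex_sapdP _ _ _ _ _ _ hp₁ hp₂ hl0 (sub_nonneg.2 hl1) (add_sub_cancel l 1), ?_⟩
  simpa [hsl₁, hsl₂] using hmix

/-- `𝒞_ρ` is convex: the set of `c ∈ (0,1)` such that `𝒫_ρ` meets the
slice `{α = c·s}` is convex. -/
theorem C_rho_convex
    (Lxx Lyy Lyx μx μy ρ : ℝ)
    (hLxx : 0 ≤ Lxx) (hLyy : 0 ≤ Lyy) (hLyx : 0 < Lyx)
    (hμx : 0 < μx) (hμy : 0 < μy) (hρ0 : 0 < ρ) (hρ1 : ρ < 1) :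
    ∀ c₁ ∈ {c : ℝ | c ∈ Set.Ioo (0 : ℝ) 1 ∧
        ∃ p ∈ sapdP Lxx Lyy Lyx μx μy ρ, p.2.2.2 = c * p.2.1},
      ∀ c₂ ∈ {c : ℝ | c ∈ Set.Ioo (0 : ℝ) 1 ∧
        ∃ p ∈ sapdP Lxx Lyy Lyx μx μy ρ, p.2.2.2 = c * p.2.1},
      ∀ β : ℝ, 0 ≤ β → β ≤ 1 →
        β * c₁ + (1 - β) * c₂ ∈ {c : ℝ | c ∈ Set.Ioo (0 : ℝ) 1 ∧
          ∃ p ∈ sapdP Lxx Lyy Lyx μx μy ρ, p.2.2.2 = c * p.2.1} :=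
  C_rho_convex_general Lxx Lyy Lyx μx μy ρ
end
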